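/- arXiv:1107.2028 — 7 statements merged into one kernel-verified Lean document; each statement's English description precedes it below -/
import Mathlib

section
/- If A is a complex symmetric N×N matrix (A = Aᵀ), then A admits a Takagi factorization: there exist nonnegative reals s₁,…,s_N and an orthonormal set of vectors u₁,…,u_N in ℂ^N such that A = Σ_m s_m · conj(u_m) · u_mᴴ, equivalently A u_m = s_m · conj(u_m) for each m. -/
/-! The antilinear map `T v = conj (A v)` satisfies `⟪T x, y⟫ = ⟪T y, x⟫` because `A` is symmetric,
so `T ∘ T` is a ℂ-linear self-adjoint map, with `⟪T (T x), x⟫ = ‖T x‖²`. If `T (T x) = s² x` with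
`s ≥ 0` and `x ≠ 0`, then `T x + s x` is an eigenvector of `T` for `s`, unless it vanishes, in which
case `I x` is. The orthogonal complement of an eigenvector of `T` is `T`-invariant, so induction on
the dimension gives an orthonormal basis of such eigenvectors; the matrix with these columns is
unitary, which turns the eigenvector equations into the rank-one expansion of `A`. -/

open Matrix
open Module
open scoped InnerProductSpace

theorem Orthonormal.fin_cons {𝕜 F : Type*} [RCLike 𝕜] [NormedAddCommGroup F]
    [InnerProductSpace 𝕜 F] {n : ℕ} {v : Fin n → F} (hv : Orthonormal 𝕜 v) {x : F}
    (hx : ‖x‖ = 1) (hxv : ∀ i, ⟪x, v i⟫_𝕜 = 0) :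
    Orthonormal 𝕜 (Fin.cons x v : Fin (n + 1) → F) := by
  refine ⟨Fin.cases hx hv.1, fun i j hij => ?_⟩
  cases i using Fin.cases <;> cases j using Fin.cases
  · exact absurd rfl hij
  · exact hxv _
  · exact inner_eq_zero_symm.1 (hxv _)
  · exact hv.2 (by simpa using hij)

namespace LinearMap

theorem exists_ne_zero_apply_eq_smul_of_apply_apply_eq {M : Type*} [AddCommGroup M]
    [Module ℂ M] (T : M →ₗ⋆[ℂ] M) {x : M} (hx : x ≠ 0) {s : ℝ}
    (h : T (T x) = ((s ^ 2 : ℝ) : ℂ) • x) : ∃ y ≠ 0, T y = (s : ℂ) • y := by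
  by_cases hy : T x + (s : ℂ) • x = 0
  · refine ⟨Complex.I • x, smul_ne_zero Complex.I_ne_zero hx, ?_⟩
    rw [map_smulₛₗ, Complex.conj_I, eq_neg_of_add_eq_zero_left hy, smul_neg, neg_smul, neg_neg,
      smul_comm]
  · refine ⟨T x + (s : ℂ) • x, hy, ?_⟩
    rw [map_add, h, map_smulₛₗ, Complex.conj_ofReal, smul_add, add_comm, smul_smul]
    push_cast
    ring_nf

variable {E : Type*} [NormedAddCommGroup E] [InnerProductSpace ℂ E]

def IsConjSymmetric (T : E →ₗ⋆[ℂ] E) : Prop :=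
  ∀ x y, ⟪T x, y⟫_ℂ = ⟪T y, x⟫_ℂ

namespace IsConjSymmetric

variable {T : E →ₗ⋆[ℂ] E}

theorem isSymmetric_comp_self (hT : T.IsConjSymmetric) : (T.comp T : E →ₗ[ℂ] E).IsSymmetric := by
  intro x y
  rw [comp_apply, comp_apply, hT (T x) y, ← inner_conj_symm x, hT (T y) x, inner_conj_symm]

theorem exists_norm_eq_one_apply_eq_nonneg_smul [FiniteDimensional ℂ E] [Nontrivial E]
    (hT : T.IsConjSymmetric) : ∃ x, ‖x‖ = 1 ∧ ∃ s : ℝ, 0 ≤ s ∧ T x = (s : ℂ) • x := by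
  obtain ⟨μ, hμ⟩ : ∃ μ : ℝ, Module.End.HasEigenvalue (T.comp T : E →ₗ[ℂ] E) μ :=
    ⟨_, hT.isSymmetric_comp_self.hasEigenvalue_iSup_of_finiteDimensional⟩
  obtain ⟨x, hx⟩ := hμ.exists_hasEigenvector
  have hTTx : T (T x) = (μ : ℂ) • x := hx.apply_eq_smul
  have hμ_norm : μ * ‖x‖ ^ 2 = ‖T x‖ ^ 2 := by
    have h := hT (T x) x
    rw [hTTx, inner_smul_left, Complex.conj_ofReal, inner_self_eq_norm_sq_to_K,
      inner_self_eq_norm_sq_to_K] at h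
    apply Complex.ofReal_injective
    push_cast
    simpa using h
  have hμ_nonneg : 0 ≤ μ :=
    nonneg_of_mul_nonneg_left (hμ_norm ▸ sq_nonneg _) (pow_pos (norm_pos_iff.2 hx.2) 2)
  obtain ⟨y, hy, hTy⟩ := T.exists_ne_zero_apply_eq_smul_of_apply_apply_eq hx.2 (s := √μ)
    (by rw [Real.sq_sqrt hμ_nonneg, hTTx])
  refine ⟨(‖y‖⁻¹ : ℂ) • y, norm_smul_inv_norm hy, √μ, Real.sqrt_nonneg μ, ?_⟩
  rw [map_smulₛₗ, hTy, smul_comm, map_inv₀, Complex.conj_ofReal]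

theorem apply_mem_orthogonal_singleton (hT : T.IsConjSymmetric) {x : E} {s : ℝ}
    (hx : T x = (s : ℂ) • x) {y : E} (hy : y ∈ (ℂ ∙ x)ᗮ) : T y ∈ (ℂ ∙ x)ᗮ := by
  rw [Submodule.mem_orthogonal_singleton_iff_inner_right] at hy ⊢
  rw [← inner_conj_symm, hT, hx, inner_smul_left, hy, mul_zero, map_zero]

theorem restrict (hT : T.IsConjSymmetric) {K : Submodule ℂ E} (hK : ∀ y ∈ K, T y ∈ K) :
    (T.restrict hK).IsConjSymmetric :=
  fun x y => hT x y

theorem exists_orthonormal_apply_eq_nonneg_smul (hT : T.IsConjSymmetric) {n : ℕ}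
    (hn : finrank ℂ E = n) : ∃ (u : Fin n → E) (s : Fin n → ℝ),
      Orthonormal ℂ u ∧ ∀ i, 0 ≤ s i ∧ T (u i) = (s i : ℂ) • u i := by
  induction n generalizing E with
  | zero => exact ⟨0, 0, ⟨isEmptyElim, fun i => isEmptyElim i⟩, isEmptyElim⟩
  | succ n ih =>
    have : FiniteDimensional ℂ E := Module.finite_of_finrank_eq_succ hn
    have : Nontrivial E := Module.nontrivial_of_finrank_eq_succ hn
    obtain ⟨x, hx, s, hs, hTx⟩ := hT.exists_norm_eq_one_apply_eq_nonneg_smul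
    have hK := fun y => hT.apply_mem_orthogonal_singleton hTx (y := y)
    have : Fact (finrank ℂ E = n + 1) := ⟨hn⟩
    obtain ⟨u, t, hu, hut⟩ := ih (hT.restrict hK)
      (Submodule.finrank_orthogonal_span_singleton (norm_ne_zero_iff.1 (hx ▸ one_ne_zero)))
    refine ⟨Fin.cons x ((ℂ ∙ x)ᗮ.subtypeₗᵢ ∘ u), Fin.cons s t,
      (hu.comp_linearIsometry _).fin_cons hx fun i =>
        (u i).2 x (Submodule.mem_span_singleton_self x),
      Fin.cases ⟨hs, hTx⟩ fun i => ⟨(hut i).1, congrArg Subtype.val (hut i).2⟩⟩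

end IsConjSymmetric

end LinearMap

namespace Matrix

section Orthonormal

variable {n R : Type*} [Fintype n] [DecidableEq n] [CommRing R] [StarRing R] {u : n → n → R}

theorem ext_of_mulVec_orthonormal (hu : ∀ i j, star (u i) ⬝ᵥ u j = if i = j then 1 else 0)
    {A B : Matrix n n R} (h : ∀ i, A *ᵥ u i = B *ᵥ u i) : A = B := by
  set U : Matrix n n R := (of u)ᵀ
  have hU : U * Uᴴ = 1 := by
    refine mul_eq_one_comm.1 (ext fun i j => ?_)
    simpa [mul_apply, one_apply, U, dotProduct] using hu i j
  have hAB : A * U = B * U := ext fun i j => by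
    simpa [mul_apply, U, mulVec, dotProduct] using congrFun (h j) i
  calc A = A * U * Uᴴ := by rw [Matrix.mul_assoc, hU, Matrix.mul_one]
    _ = B := by rw [hAB, Matrix.mul_assoc, hU, Matrix.mul_one]

theorem eq_sum_smul_vecMulVec_of_mulVec_eq_smul_star
    (hu : ∀ i j, star (u i) ⬝ᵥ u j = if i = j then 1 else 0) {A : Matrix n n R} {s : n → R}
    (h : ∀ i, A *ᵥ u i = s i • star (u i)) :
    A = ∑ i, s i • vecMulVec (star (u i)) (star (u i)) := by
  refine ext_of_mulVec_orthonormal hu fun j => ?_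
  simp [h, sum_mulVec, smul_mulVec, vecMulVec_mulVec, hu]

end Orthonormal

variable {n : Type*} [Fintype n]

def conjMulVecLin (A : Matrix n n ℂ) : EuclideanSpace ℂ n →ₗ⋆[ℂ] EuclideanSpace ℂ n where
  toFun v := WithLp.toLp 2 (star (A *ᵥ v.ofLp))
  map_add' v w := by simp [mulVec_add]
  map_smul' c v := by ext; simp [mulVec_smul]

theorem isConjSymmetric_conjMulVecLin {A : Matrix n n ℂ} (hA : Aᵀ = A) :
    A.conjMulVecLin.IsConjSymmetric := by
  intro x y
  simp only [EuclideanSpace.inner_eq_star_dotProduct, conjMulVecLin, LinearMap.coe_mk,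
    AddHom.coe_mk, star_star]
  rw [dotProduct_mulVec, ← mulVec_transpose, hA, dotProduct_comm]

end Matrix

/-- Takagi factorization of a complex symmetric matrix. -/
theorem takagi_factorization (N : ℕ) (A : Matrix (Fin N) (Fin N) ℂ)
    (hA : A = Aᵀ) :
    ∃ (s : Fin N → ℝ) (u : Fin N → Fin N → ℂ),
      (∀ m, 0 ≤ s m) ∧
      (∀ m m', dotProduct (star (u m)) (u m') = if m = m' then 1 else 0) ∧
      A = ∑ m, (s m : ℂ) • Matrix.vecMulVec (star (u m)) (star (u m)) ∧
      ∀ m, A.mulVec (u m) = (s m : ℂ) • star (u m) := by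
  obtain ⟨u, s, hu, hus⟩ :=
    (isConjSymmetric_conjMulVecLin hA.symm).exists_orthonormal_apply_eq_nonneg_smul
      finrank_euclideanSpace_fin
  have horth : ∀ m m', star (u m).ofLp ⬝ᵥ (u m').ofLp = if m = m' then 1 else 0 := fun m m' => by
    rw [dotProduct_comm, ← EuclideanSpace.inner_eq_star_dotProduct, orthonormal_iff_ite.1 hu]
  have heig : ∀ m, A *ᵥ (u m).ofLp = (s m : ℂ) • star (u m).ofLp := fun m => by
    have := congrArg (fun v => star v.ofLp) (hus m).2
    simpa [conjMulVecLin] using this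
  exact ⟨s, fun m => (u m).ofLp, fun m => (hus m).1, horth,
    eq_sum_smul_vecMulVec_of_mulVec_eq_smul_star horth heig, heig⟩
end

section
/- Let w ∈ ℝ^N be a positive weight, A an N×N complex matrix, and B = diag(√w) · A · diag(√w). If B has a Takagi factorization Σ_m s_m conj(q_m) q_mᴴ with s₁ ≥ … ≥ s_N and the s_m distinct, then the unique minimizer over rank-at-most-k matrices R of the weighted Frobenius norm ‖A − R‖_w is R = Σ_{m=1}^{k} s_m conj(u_m) u_mᴴ, where u_m(l) = q_m(l)/√(w(l)). -/
/-!
Conjugating by `diag(√w)` turns the weighted norm into the Frobenius norm, and the Takagi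
factorization `B = V diag(s) Vᵀ` with `V` unitary reduces the problem, by unitary invariance of the
Frobenius norm, to approximating `D = diag(s)` by matrices `G` of rank at most `k`. For such `G`,
the orthogonal projection `P` onto an `(N - k)`-dimensional subspace of `ker G` gives
`‖D - G‖² ≥ ‖D P‖² = Σ s_j² P_jj`. Since `0 ≤ P_jj ≤ 1` and `Σ P_jj = N - k`, the strict decrease of
`s_j²` makes this at least `Σ_{j ≥ k} s_j²`, with equality only if `P = diag(0, …, 0, 1, …, 1)`,
which in turn forces `G = diag(s_1, …, s_k, 0, …, 0)`.
-/

/-- Squared weighted Frobenius norm `‖A‖_w² = Σ_{j,l} w(j)|A(j,l)|² w(l)`. -/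
noncomputable def wnormSq {N : ℕ} (w : Fin N → ℝ) (A : Matrix (Fin N) (Fin N) ℂ) : ℝ :=
  ∑ j, ∑ l, w j * ‖A j l‖ ^ 2 * w l

open Matrix Module

noncomputable def frobSq {𝕜 m n : Type*} [RCLike 𝕜] [Fintype m] [Fintype n]
    (M : Matrix m n 𝕜) : ℝ :=
  ∑ i, ∑ j, ‖M i j‖ ^ 2

section Frobenius

variable {𝕜 m n : Type*} [RCLike 𝕜] [Fintype m] [Fintype n]

theorem frobSq_nonneg (M : Matrix m n 𝕜) : 0 ≤ frobSq M := by
  unfold frobSq; positivity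

theorem frobSq_eq_zero_iff {M : Matrix m n 𝕜} : frobSq M = 0 ↔ M = 0 := by
  rw [frobSq, Finset.sum_eq_zero_iff_of_nonneg fun i _ => by positivity, ← Matrix.ext_iff]
  simp [Finset.sum_eq_zero_iff_of_nonneg]

theorem frobSq_conjTranspose (M : Matrix m n 𝕜) : frobSq Mᴴ = frobSq M := by
  simp only [frobSq, conjTranspose_apply, norm_star]
  exact Finset.sum_comm

theorem frobSq_eq_re_trace (M : Matrix m n 𝕜) : frobSq M = RCLike.re (Mᴴ * M).trace := by
  simp only [trace, diag, mul_apply, conjTranspose_apply, RCLike.star_def, RCLike.conj_mul,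
    map_sum, ← RCLike.ofReal_pow, RCLike.ofReal_re, frobSq]
  exact Finset.sum_comm

theorem frobSq_unitary_mul [DecidableEq m] {U : Matrix m m 𝕜} (hU : U ∈ unitaryGroup m 𝕜)
    (M : Matrix m n 𝕜) : frobSq (U * M) = frobSq M := by
  rw [frobSq_eq_re_trace, frobSq_eq_re_trace, conjTranspose_mul, Matrix.mul_assoc,
    ← Matrix.mul_assoc Uᴴ, ← star_eq_conjTranspose, Unitary.star_mul_self_of_mem hU,
    Matrix.one_mul]

theorem frobSq_mul_unitary [DecidableEq n] {U : Matrix n n 𝕜} (hU : U ∈ unitaryGroup n 𝕜)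
    (M : Matrix m n 𝕜) : frobSq (M * U) = frobSq M := by
  rw [← frobSq_conjTranspose, conjTranspose_mul, ← star_eq_conjTranspose U,
    frobSq_unitary_mul (Unitary.star_mem hU), frobSq_conjTranspose]

theorem frobSq_mul_isStarProjection [DecidableEq n] {P : Matrix n n 𝕜}
    (hP : IsStarProjection P) (M : Matrix m n 𝕜) :
    frobSq (M * P) = RCLike.re (Mᴴ * M * P).trace := by
  rw [frobSq_eq_re_trace, conjTranspose_mul, ← star_eq_conjTranspose, hP.isSelfAdjoint.star_eq,
    Matrix.mul_assoc, trace_mul_comm, Matrix.mul_assoc, Matrix.mul_assoc,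
    hP.isIdempotentElem.eq, Matrix.mul_assoc]

theorem frobSq_eq_frobSq_mul_add_frobSq_mul_one_sub [DecidableEq n] {P : Matrix n n 𝕜}
    (hP : IsStarProjection P) (M : Matrix m n 𝕜) :
    frobSq M = frobSq (M * P) + frobSq (M * (1 - P)) := by
  rw [frobSq_mul_isStarProjection hP, frobSq_mul_isStarProjection hP.one_sub, ← map_add,
    ← trace_add, ← Matrix.mul_add, add_sub_cancel, Matrix.mul_one, frobSq_eq_re_trace]

theorem frobSq_diagonal [DecidableEq n] (v : n → 𝕜) :
    frobSq (diagonal v) = ∑ i, ‖v i‖ ^ 2 := by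
  simp [frobSq, diagonal_apply, apply_ite]

theorem frobSq_diagonal_mul_isStarProjection [DecidableEq n] {P : Matrix n n 𝕜}
    (hP : IsStarProjection P) (v : n → 𝕜) :
    frobSq (diagonal v * P) = ∑ j, ‖v j‖ ^ 2 * RCLike.re (P j j) := by
  rw [frobSq_mul_isStarProjection hP, diagonal_conjTranspose, diagonal_mul_diagonal, trace,
    map_sum]
  refine Finset.sum_congr rfl fun j _ => ?_
  rw [diag_apply, diagonal_mul, Pi.star_apply, RCLike.star_def, RCLike.conj_mul,
    ← RCLike.ofReal_pow, RCLike.re_ofReal_mul]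

end Frobenius

section StarProjection

variable {𝕜 n : Type*} [RCLike 𝕜] [Fintype n] {P : Matrix n n 𝕜}

theorem IsStarProjection.diag_eq_sum_norm_sq (hP : IsStarProjection P) (j : n) :
    P j j = ((∑ i, ‖P i j‖ ^ 2 : ℝ) : 𝕜) := by
  have hstar : ∀ i, P j i = star (P i j) := fun i => by
    rw [← congrFun (congrFun hP.isSelfAdjoint.star_eq j) i]; rfl
  conv_lhs => rw [← hP.isIdempotentElem.eq]
  simp only [mul_apply, hstar, RCLike.star_def, RCLike.conj_mul, RCLike.ofReal_sum,
    RCLike.ofReal_pow]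

theorem IsStarProjection.ofReal_re_diag (hP : IsStarProjection P) (j : n) :
    (RCLike.re (P j j) : 𝕜) = P j j := by
  rw [hP.diag_eq_sum_norm_sq, RCLike.ofReal_re]

theorem IsStarProjection.re_diag_nonneg (hP : IsStarProjection P) (j : n) :
    0 ≤ RCLike.re (P j j) := by
  rw [hP.diag_eq_sum_norm_sq, RCLike.ofReal_re]
  positivity

theorem IsStarProjection.re_diag_le_one [DecidableEq n] (hP : IsStarProjection P) (j : n) :
    RCLike.re (P j j) ≤ 1 := by
  have := hP.one_sub.re_diag_nonneg j
  rw [Matrix.sub_apply, one_apply_eq, map_sub, RCLike.one_re] at this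
  linarith

theorem IsStarProjection.apply_eq_zero_of_diag_eq_zero (hP : IsStarProjection P) {j : n}
    (hj : P j j = 0) (i : n) : P i j = 0 := by
  rw [hP.diag_eq_sum_norm_sq, RCLike.ofReal_eq_zero,
    Finset.sum_eq_zero_iff_of_nonneg fun _ _ => by positivity] at hj
  simpa using hj i (Finset.mem_univ i)

theorem IsStarProjection.eq_diagonal_of_diag [DecidableEq n] (hP : IsStarProjection P)
    (hdiag : ∀ j, P j j = 0 ∨ P j j = 1) : P = diagonal P.diag := by
  ext i j
  rcases hdiag j with h | h
  · rw [hP.apply_eq_zero_of_diag_eq_zero h]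
    by_cases hij : i = j <;> simp [hij, h]
  · have h' : (1 - P) j j = 0 := by rw [Matrix.sub_apply, one_apply_eq, h, sub_self]
    have := hP.one_sub.apply_eq_zero_of_diag_eq_zero h' i
    rw [Matrix.sub_apply, sub_eq_zero] at this
    rw [← this]
    by_cases hij : i = j <;> simp [hij, h, one_apply]

end StarProjection

theorem Submodule.exists_le_finrank_eq {K V : Type*} [DivisionRing K] [AddCommGroup V]
    [Module K V] (U : Submodule K V) [FiniteDimensional K U] {m : ℕ} (hm : m ≤ finrank K U) :
    ∃ W ≤ U, finrank K W = m := by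
  obtain ⟨f, hf⟩ := exists_linearIndependent_of_le_finrank hm
  refine ⟨Submodule.span K (Set.range (U.subtype ∘ f)), ?_, ?_⟩
  · rw [Submodule.span_le]
    rintro _ ⟨i, rfl⟩
    exact (f i).2
  · rw [finrank_span_eq_card (hf.map' U.subtype U.ker_subtype), Fintype.card_fin]

theorem Matrix.exists_isStarProjection_mul_eq_zero {𝕜 n : Type*} [RCLike 𝕜] [Fintype n]
    [DecidableEq n] (G : Matrix n n 𝕜) {m : ℕ} (hm : m + G.rank ≤ Fintype.card n) :
    ∃ P : Matrix n n 𝕜, IsStarProjection P ∧ G * P = 0 ∧ P.trace = m := by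
  have hK : m ≤ finrank 𝕜 (LinearMap.ker (toEuclideanLin G)) := by
    have := (toEuclideanLin G).finrank_range_add_finrank_ker
    rw [toEuclideanLin_eq_toLin_orthonormal, ← rank_eq_finrank_range_toLin,
      finrank_euclideanSpace, ← toEuclideanLin_eq_toLin_orthonormal] at this
    omega
  obtain ⟨W, hWK, hW⟩ := (LinearMap.ker (toEuclideanLin G)).exists_le_finrank_eq hK
  let e : (EuclideanSpace 𝕜 n →L[𝕜] EuclideanSpace 𝕜 n) ≃⋆ₐ[𝕜] Matrix n n 𝕜 :=
    toEuclideanCLM.symm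
  refine ⟨e W.starProjection, isStarProjection_starProjection.map e, ?_, ?_⟩
  · refine (map_eq_zero_iff e.symm (EquivLike.injective _)).1 ?_
    ext1 x
    rw [map_mul, StarAlgEquiv.symm_apply_apply]
    exact hWK (W.starProjection_apply_mem x)
  · have hproj : LinearMap.IsProj W (W.starProjection : EuclideanSpace 𝕜 n →ₗ[𝕜] _) :=
      ⟨W.starProjection_apply_mem, fun x hx => W.starProjection_eq_self_iff.2 hx⟩
    rw [← hW, ← hproj.trace,
      LinearMap.trace_eq_matrix_trace 𝕜 (EuclideanSpace.basisFun n 𝕜).toBasis]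
    rfl

def tailIndicator (N k : ℕ) (j : Fin N) : ℝ := if (j : ℕ) < k then 0 else 1

theorem sum_tailIndicator (N k : ℕ) : ∑ j, tailIndicator N k j = (N - k : ℕ) := by
  unfold tailIndicator
  rw [Fin.sum_univ_eq_sum_range (fun j => if j < k then (0 : ℝ) else 1)]
  simp only [Finset.sum_ite, Finset.sum_const_zero, Finset.sum_const, nsmul_eq_mul, mul_one,
    zero_add, not_lt]
  rw [Finset.range_eq_Ico, Finset.Ico_filter_le, Nat.card_Ico, max_eq_right (Nat.zero_le k)]

theorem StrictAnti.mul_sub_tailIndicator_nonneg {N k : ℕ} {c : Fin N → ℝ} (hc : StrictAnti c)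
    (hk : k < N) {x : ℝ} (hx0 : 0 ≤ x) (hx1 : x ≤ 1) (j : Fin N) :
    0 ≤ (c j - c ⟨k, hk⟩) * (x - tailIndicator N k j) ∧
      (j ≠ ⟨k, hk⟩ → (c j - c ⟨k, hk⟩) * (x - tailIndicator N k j) = 0 →
        x = tailIndicator N k j) := by
  rcases lt_or_ge (j : ℕ) k with hj | hj
  · have hcj : c ⟨k, hk⟩ < c j := hc (show j < ⟨k, hk⟩ from hj)
    simp only [tailIndicator, if_pos hj, sub_zero]
    exact ⟨mul_nonneg (by linarith) hx0, fun _ h => (mul_eq_zero.1 h).resolve_left (by linarith)⟩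
  · simp only [tailIndicator, if_neg (not_lt.2 hj)]
    refine ⟨mul_nonneg_of_nonpos_of_nonpos (by linarith [hc.antitone (show ⟨k, hk⟩ ≤ j from hj)])
      (by linarith), fun hjk h => ?_⟩
    have : c j < c ⟨k, hk⟩ := hc (lt_of_le_of_ne (show ⟨k, hk⟩ ≤ j from hj) (Ne.symm hjk))
    linarith [(mul_eq_zero.1 h).resolve_left (by linarith)]

theorem StrictAnti.sum_mul_tailIndicator_le {N k : ℕ} {c p : Fin N → ℝ} (hc : StrictAnti c)
    (hp0 : ∀ j, 0 ≤ p j) (hp1 : ∀ j, p j ≤ 1) (hsum : ∑ j, p j = ∑ j, tailIndicator N k j) :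
    ∑ j, c j * tailIndicator N k j ≤ ∑ j, c j * p j ∧
      (∑ j, c j * tailIndicator N k j = ∑ j, c j * p j → p = tailIndicator N k) := by
  rcases lt_or_ge k N with hkN | hNk
  · set κ : Fin N := ⟨k, hkN⟩
    have hterm j := hc.mul_sub_tailIndicator_nonneg hkN (hp0 j) (hp1 j) j
    have hdiff : ∑ j, c j * p j - ∑ j, c j * tailIndicator N k j
        = ∑ j, (c j - c κ) * (p j - tailIndicator N k j) := by
      have : ∑ j, c κ * (p j - tailIndicator N k j) = 0 := by
        rw [← Finset.mul_sum, Finset.sum_sub_distrib, hsum, sub_self, mul_zero]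
      rw [← add_zero (∑ j, (c j - c κ) * _), ← this, ← Finset.sum_add_distrib,
        ← Finset.sum_sub_distrib]
      exact Finset.sum_congr rfl fun j _ => by ring
    refine ⟨by linarith [Finset.sum_nonneg fun j (_ : j ∈ Finset.univ) => (hterm j).1], ?_⟩
    intro heq
    have hzero := (Finset.sum_eq_zero_iff_of_nonneg fun j _ => (hterm j).1).1 (by linarith)
    have hoff : ∀ j ≠ κ, p j = tailIndicator N k j := fun j hj =>
      (hterm j).2 hj (hzero j (Finset.mem_univ j))
    have hκ : p κ - tailIndicator N k κ = 0 := by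
      rw [← Finset.sum_eq_single κ (fun j _ hj => sub_eq_zero.2 (hoff j hj))
        (fun h => absurd (Finset.mem_univ κ) h), Finset.sum_sub_distrib, hsum, sub_self]
    funext j
    by_cases hj : j = κ
    · rw [hj]; linarith
    · exact hoff j hj
  · have htail : tailIndicator N k = 0 := funext fun j => if_pos (j.2.trans_le hNk)
    have hp : p = tailIndicator N k := by
      simp only [htail, Pi.zero_apply, Finset.sum_const_zero] at hsum
      rw [Finset.sum_eq_zero_iff_of_nonneg fun j _ => hp0 j] at hsum
      rw [htail]
      exact funext fun j => hsum j (Finset.mem_univ j)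
    exact ⟨le_of_eq (by rw [hp]), fun _ => hp⟩

theorem eq_diagonal_ite_of_isStarProjection {𝕜 : Type*} [RCLike 𝕜] {N k : ℕ} {d : Fin N → 𝕜}
    {G P : Matrix (Fin N) (Fin N) 𝕜} (hP : IsStarProjection P)
    (hdiag : ∀ j, RCLike.re (P j j) = tailIndicator N k j) (hGP : G * P = 0)
    (hG : (diagonal d - G) * (1 - P) = 0) :
    G = diagonal fun j : Fin N => if (j : ℕ) < k then d j else 0 := by
  have hPjj : ∀ j, P j j = tailIndicator N k j := fun j => by rw [← hP.ofReal_re_diag, hdiag]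
  set E : Matrix (Fin N) (Fin N) 𝕜 := diagonal fun j => (tailIndicator N k j : 𝕜) with hE
  have hPE : P = E := by
    refine (hP.eq_diagonal_of_diag fun j => ?_).trans (congrArg diagonal (funext hPjj))
    rw [hPjj]
    unfold tailIndicator
    split_ifs <;> simp
  rw [hPE, Matrix.sub_mul, sub_eq_zero] at hG
  rw [hPE] at hGP
  calc G = G * E + G * (1 - E) := by rw [← Matrix.mul_add, add_sub_cancel, Matrix.mul_one]
    _ = diagonal d * (1 - E) := by rw [hGP, zero_add, hG]
    _ = _ := by
      rw [hE, ← diagonal_one, diagonal_sub, diagonal_mul_diagonal]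
      refine congrArg diagonal (funext fun j => ?_)
      unfold tailIndicator
      split_ifs <;> simp

theorem frobSq_diagonal_sub_le_of_rank_le {𝕜 : Type*} [RCLike 𝕜] {N k : ℕ} {d : Fin N → ℝ}
    (hd0 : ∀ j, 0 ≤ d j) (hd : StrictAnti d) {G : Matrix (Fin N) (Fin N) 𝕜} (hG : G.rank ≤ k) :
    frobSq (diagonal (fun j => (d j : 𝕜)) -
        diagonal fun j : Fin N => if (j : ℕ) < k then (d j : 𝕜) else 0)
        ≤ frobSq (diagonal (fun j => (d j : 𝕜)) - G) ∧
      (frobSq (diagonal (fun j => (d j : 𝕜)) -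
          diagonal fun j : Fin N => if (j : ℕ) < k then (d j : 𝕜) else 0)
        = frobSq (diagonal (fun j => (d j : 𝕜)) - G) →
        G = diagonal fun j : Fin N => if (j : ℕ) < k then (d j : 𝕜) else 0) := by
  set D : Matrix (Fin N) (Fin N) 𝕜 := diagonal fun j => (d j : 𝕜) with hD
  obtain ⟨P, hP, hGP, htr⟩ := G.exists_isStarProjection_mul_eq_zero (m := N - k) (by
    have := G.rank_le_card_width
    rw [Fintype.card_fin] at this ⊢
    omega)
  have hsplit : frobSq (D - G)
      = ∑ j, d j ^ 2 * RCLike.re (P j j) + frobSq ((D - G) * (1 - P)) := by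
    rw [frobSq_eq_frobSq_mul_add_frobSq_mul_one_sub hP, Matrix.sub_mul, hGP, sub_zero,
      frobSq_diagonal_mul_isStarProjection hP]
    simp only [RCLike.norm_ofReal, sq_abs]
  have hopt : frobSq (D - diagonal fun j : Fin N => if (j : ℕ) < k then (d j : 𝕜) else 0)
      = ∑ j, d j ^ 2 * tailIndicator N k j := by
    rw [hD, diagonal_sub, frobSq_diagonal]
    refine Finset.sum_congr rfl fun j _ => ?_
    unfold tailIndicator
    split_ifs <;> simp
  have hsum : ∑ j, RCLike.re (P j j) = ∑ j, tailIndicator N k j := by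
    rw [sum_tailIndicator, ← map_sum, show ∑ j, P j j = P.trace from rfl, htr, RCLike.natCast_re]
  have hd2 : StrictAnti fun j => d j ^ 2 := fun i j hij =>
    pow_lt_pow_left₀ (hd hij) (hd0 j) two_ne_zero
  obtain ⟨hle, hunique⟩ := hd2.sum_mul_tailIndicator_le hP.re_diag_nonneg hP.re_diag_le_one hsum
  have hrest := frobSq_nonneg ((D - G) * (1 - P))
  rw [hopt, hsplit]
  refine ⟨by linarith, fun heq => eq_diagonal_ite_of_isStarProjection hP
    (congrFun (hunique (by linarith))) hGP (frobSq_eq_zero_iff.1 (by linarith))⟩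

theorem Matrix.sum_smul_vecMulVec_self {α m n : Type*} [CommSemiring α] [Fintype m]
    [DecidableEq m] (v : m → n → α) (f : m → α) :
    ∑ i, f i • vecMulVec (v i) (v i) = (of v)ᵀ * diagonal f * of v := by
  ext j l
  rw [mul_apply, Matrix.sum_apply]
  simp only [Matrix.smul_apply, vecMulVec_apply, mul_diagonal, transpose_apply, of_apply,
    smul_eq_mul]
  exact Finset.sum_congr rfl fun i _ => by ring

theorem Matrix.diagonal_mul_vecMulVec_mul_diagonal {α n : Type*} [CommSemiring α] [Fintype n]
    [DecidableEq n] (a b x y : n → α) :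
    diagonal a * vecMulVec x y * diagonal b = vecMulVec (a * x) (y * b) := by
  ext i j
  simp only [mul_diagonal, diagonal_mul, vecMulVec_apply, Pi.mul_apply]
  ring

theorem Matrix.of_mem_unitaryGroup_of_orthonormal {𝕜 n : Type*} [RCLike 𝕜] [Fintype n]
    [DecidableEq n] {v : n → n → 𝕜} (hv : ∀ i j, v i ⬝ᵥ star (v j) = if i = j then 1 else 0) :
    of v ∈ unitaryGroup n 𝕜 := by
  rw [mem_unitaryGroup_iff]
  ext i j
  rw [one_apply, ← hv, mul_apply, dotProduct]
  rfl

theorem frobSq_sub_le_of_takagi {𝕜 : Type*} [RCLike 𝕜] {N k : ℕ} {d : Fin N → ℝ}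
    (hd0 : ∀ j, 0 ≤ d j) (hd : StrictAnti d) {U B Bk G : Matrix (Fin N) (Fin N) 𝕜}
    (hU : U ∈ unitaryGroup (Fin N) 𝕜) (hB : B = Uᵀ * diagonal (fun j => (d j : 𝕜)) * U)
    (hBk : Bk = Uᵀ * diagonal (fun j : Fin N => if (j : ℕ) < k then (d j : 𝕜) else 0) * U)
    (hG : G.rank ≤ k) :
    frobSq (B - Bk) ≤ frobSq (B - G) ∧ (frobSq (B - Bk) = frobSq (B - G) → G = Bk) := by
  have hUt : Uᵀ ∈ unitaryGroup (Fin N) 𝕜 := transpose_mem_unitaryGroup_iff.2 hU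
  have hcancel : ∀ M, star Uᵀ * (Uᵀ * M * U) * star U = M := fun M => by
    rw [← Matrix.mul_assoc, ← Matrix.mul_assoc, Unitary.star_mul_self_of_mem hUt, Matrix.one_mul,
      Matrix.mul_assoc, Unitary.mul_star_self_of_mem hU, Matrix.mul_one]
  have hcancel' : ∀ M, Uᵀ * (star Uᵀ * M * star U) * U = M := fun M => by
    rw [← Matrix.mul_assoc, ← Matrix.mul_assoc, Unitary.mul_star_self_of_mem hUt, Matrix.one_mul,
      Matrix.mul_assoc, Unitary.star_mul_self_of_mem hU, Matrix.mul_one]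
  have hnorm : ∀ X, frobSq (B - X)
      = frobSq (diagonal (fun j => (d j : 𝕜)) - star Uᵀ * X * star U) := fun X => by
    rw [← frobSq_mul_unitary (Unitary.star_mem hU) (B - X),
      ← frobSq_unitary_mul (Unitary.star_mem hUt), ← Matrix.mul_assoc, Matrix.mul_sub,
      Matrix.sub_mul, hB, hcancel]
  have hrank : (star Uᵀ * G * star U).rank ≤ k :=
    ((rank_mul_le_left _ _).trans (rank_mul_le_right _ _)).trans hG
  obtain ⟨hle, heq⟩ := frobSq_diagonal_sub_le_of_rank_le hd0 hd hrank
  rw [hnorm, hnorm, hBk, hcancel]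
  refine ⟨hle, fun h => ?_⟩
  rw [← hcancel' G]
  exact congrArg (fun M => Uᵀ * M * U) (heq h)

theorem wnormSq_eq_frobSq {N : ℕ} {w : Fin N → ℝ} (hw : ∀ i, 0 ≤ w i)
    (Y : Matrix (Fin N) (Fin N) ℂ) :
    wnormSq w Y = frobSq (diagonal (fun i => (√(w i) : ℂ)) * Y *
      diagonal fun i => (√(w i) : ℂ)) := by
  refine Finset.sum_congr rfl fun j _ => Finset.sum_congr rfl fun l _ => ?_
  rw [mul_diagonal, diagonal_mul, norm_mul, norm_mul, Complex.norm_real, Complex.norm_real,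
    Real.norm_of_nonneg (Real.sqrt_nonneg _), Real.norm_of_nonneg (Real.sqrt_nonneg _), mul_pow,
    mul_pow, Real.sq_sqrt (hw j), Real.sq_sqrt (hw l)]

theorem weighted_eckart_young_general (N k : ℕ)
    (w : Fin N → ℝ) (hw : ∀ i, 0 < w i)
    (A B : Matrix (Fin N) (Fin N) ℂ)
    (hB : B = Matrix.diagonal (fun i => (Real.sqrt (w i) : ℂ)) * A *
              Matrix.diagonal (fun i => (Real.sqrt (w i) : ℂ)))
    (s : Fin N → ℝ) (q : Fin N → Fin N → ℂ)
    (hs : ∀ i, 0 ≤ s i)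
    (hdist : ∀ i j : Fin N, i < j → s j < s i)
    (horth : ∀ i j, dotProduct (star (q i)) (q j) = if i = j then 1 else 0)
    (hTak : B = ∑ m, (s m : ℂ) • Matrix.vecMulVec (star (q m)) (star (q m)))
    (u : Fin N → Fin N → ℂ) (hu : ∀ m l, u m l = q m l / (Real.sqrt (w l) : ℂ))
    (R : Matrix (Fin N) (Fin N) ℂ)
    (hR : R = ∑ m ∈ Finset.univ.filter (fun m : Fin N => m.1 < k),
        (s m : ℂ) • Matrix.vecMulVec (star (u m)) (star (u m))) :
    ∀ R' : Matrix (Fin N) (Fin N) ℂ, R'.rank ≤ k →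
      wnormSq w (A - R) ≤ wnormSq w (A - R') ∧
      (wnormSq w (A - R) = wnormSq w (A - R') → R' = R) := by
  intro R' hR'
  set S : Matrix (Fin N) (Fin N) ℂ := diagonal fun i => (√(w i) : ℂ)
  have hsqrt : ∀ i, (√(w i) : ℂ) ≠ 0 := fun i =>
    Complex.ofReal_ne_zero.2 (Real.sqrt_pos.2 (hw i)).ne'
  have hSRS : S * R * S = (of fun m => star (q m))ᵀ *
      diagonal (fun m : Fin N => if (m : ℕ) < k then (s m : ℂ) else 0) *
      of fun m => star (q m) := by
    have hSu : ∀ m, (fun i => (√(w i) : ℂ)) * star (u m) = star (q m) := fun m =>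
      funext fun l => by simp [hu, star_div₀, mul_div_cancel₀ _ (hsqrt l)]
    rw [← sum_smul_vecMulVec_self, hR, Finset.sum_filter, Finset.mul_sum, Finset.sum_mul]
    refine Finset.sum_congr rfl fun m _ => ?_
    split_ifs
    · rw [Matrix.mul_smul, Matrix.smul_mul, diagonal_mul_vecMulVec_mul_diagonal, hSu,
        mul_comm (star (u m)), hSu]
    · simp
  obtain ⟨hle, heq⟩ := frobSq_sub_le_of_takagi hs hdist
    (of_mem_unitaryGroup_of_orthonormal (by simpa using horth))
    (hB.symm.trans (hTak.trans (sum_smul_vecMulVec_self _ _))) hSRS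
    ((rank_mul_le_left _ _).trans ((rank_mul_le_right _ _).trans hR'))
  have hnorm : ∀ X, wnormSq w (A - X) = frobSq (S * A * S - S * X * S) := fun X => by
    rw [wnormSq_eq_frobSq (fun i => (hw i).le), Matrix.mul_sub, Matrix.sub_mul]
  rw [hnorm, hnorm]
  refine ⟨hle, fun h => ?_⟩
  have hS : IsUnit S := isUnit_diagonal.2 (Pi.isUnit_iff.2 fun i => (hsqrt i).isUnit)
  exact hS.mul_left_cancel (hS.mul_right_cancel (heq h))

/-- Weighted Eckart–Young via Takagi factorization: the truncated Takagi
factorization of `B = diag(√w) A diag(√w)`, with con-eigenvectors rescaled by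
`1/√w`, is the unique best rank-`k` approximation of `A` in the weighted
Frobenius norm. -/
theorem weighted_eckart_young (N k : ℕ) (hk : k ≤ N)
    (w : Fin N → ℝ) (hw : ∀ i, 0 < w i)
    (A B : Matrix (Fin N) (Fin N) ℂ)
    (hB : B = Matrix.diagonal (fun i => (Real.sqrt (w i) : ℂ)) * A *
              Matrix.diagonal (fun i => (Real.sqrt (w i) : ℂ)))
    (s : Fin N → ℝ) (q : Fin N → Fin N → ℂ)
    (hs : ∀ i, 0 ≤ s i)
    (hdist : ∀ i j : Fin N, i < j → s j < s i)
    (horth : ∀ i j, dotProduct (star (q i)) (q j) = if i = j then 1 else 0)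
    (hTak : B = ∑ m, (s m : ℂ) • Matrix.vecMulVec (star (q m)) (star (q m)))
    (u : Fin N → Fin N → ℂ) (hu : ∀ m l, u m l = q m l / (Real.sqrt (w l) : ℂ))
    (R : Matrix (Fin N) (Fin N) ℂ)
    (hR : R = ∑ m ∈ Finset.univ.filter (fun m : Fin N => m.1 < k),
        (s m : ℂ) • Matrix.vecMulVec (star (u m)) (star (u m))) :
    ∀ R' : Matrix (Fin N) (Fin N) ℂ, R'.rank ≤ k →
      wnormSq w (A - R) ≤ wnormSq w (A - R') ∧
      (wnormSq w (A - R) = wnormSq w (A - R') → R' = R) :=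
  weighted_eckart_young_general N k w hw A B hB s q hs hdist horth hTak u hu R hR
end

section
/- Let w be a positive weight and ω the induced anti-diagonal weight. For any f ∈ ℂ^{2N−1} and any set S of N×N Hankel matrices, a Hankel matrix H̃ ∈ S minimizes ‖Hf − H̃‖_w if and only if g = H*(H̃) minimizes ‖f − g‖_{ℓ²(ω)} over H*(S), and in that case H g = H̃. -/
/-!
`H` is an isometry from `ℓ²(ω)` into the `w`-weighted Frobenius norm (regroup the double sum
over `(j, l)` by anti-diagonals `m = j + l`), and for positive `w` every Hankel matrix `A`
satisfies `H (H* A) = A`, since `H*` averages `A` over anti-diagonals on which it is constant.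
Hence `‖Hf − A‖_w = ‖H (f − H* A)‖_w = ‖f − H* A‖_{ℓ²(ω)}` for every `A ∈ S`, and the two
minimization problems have the same objective.
-/

/-- `Hf`. -/
def hankelOf (N : ℕ) (f : Fin (2 * N - 1) → ℂ) : Matrix (Fin N) (Fin N) ℂ :=
  Matrix.of fun j l => f ⟨j.1 + l.1, by have := j.isLt; have := l.isLt; omega⟩

/-- `ω(m)`. -/
def antidiagWeight (N : ℕ) (w : Fin N → ℝ) (m : ℕ) : ℝ :=
  ∑ j : Fin N, ∑ l : Fin N, if j.1 + l.1 = m then w j * w l else 0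

/-- `H*`. -/
noncomputable def hankelAdj (N : ℕ) (w : Fin N → ℝ) (A : Matrix (Fin N) (Fin N) ℂ) :
    Fin (2 * N - 1) → ℂ :=
  fun m => ((antidiagWeight N w m.1 : ℝ) : ℂ)⁻¹ *
    ∑ j : Fin N, ∑ l : Fin N,
      if j.1 + l.1 = m.1 then (w j : ℂ) * A j l * (w l : ℂ) else 0

/-- `‖A‖_w²`. -/
noncomputable def wFrobSq (N : ℕ) (w : Fin N → ℝ) (A : Matrix (Fin N) (Fin N) ℂ) : ℝ :=
  ∑ j, ∑ l, w j * ‖A j l‖ ^ 2 * w l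

/-- `‖f‖²_{ℓ²(ω)}`. -/
noncomputable def omegaNormSq (N : ℕ) (w : Fin N → ℝ) (f : Fin (2 * N - 1) → ℂ) : ℝ :=
  ∑ m, ‖f m‖ ^ 2 * antidiagWeight N w m.1

open Finset

def IsHankel {N : ℕ} {α : Type*} (A : Matrix (Fin N) (Fin N) α) : Prop :=
  ∀ j l j' l' : Fin N, j.1 + l.1 = j'.1 + l'.1 → A j l = A j' l'

lemma hankelOf_sub (N : ℕ) (f g : Fin (2 * N - 1) → ℂ) :
    hankelOf N (f - g) = hankelOf N f - hankelOf N g :=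
  rfl

lemma wFrobSq_hankelOf (N : ℕ) (w : Fin N → ℝ) (g : Fin (2 * N - 1) → ℂ) :
    wFrobSq N w (hankelOf N g) = omegaNormSq N w g := by
  have regroup : ∀ j l : Fin N, (∑ m : Fin (2 * N - 1),
      if j.1 + l.1 = m.1 then ‖g m‖ ^ 2 * (w j * w l) else 0) =
        w j * ‖hankelOf N g j l‖ ^ 2 * w l := by
    intro j l
    have hlt : j.1 + l.1 < 2 * N - 1 := by omega
    rw [sum_eq_single_of_mem ⟨j.1 + l.1, hlt⟩ (mem_univ _) fun m _ hm =>
      if_neg fun h => hm (Fin.ext h.symm), if_pos rfl]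
    simp only [hankelOf, Matrix.of_apply]
    ring
  unfold wFrobSq omegaNormSq antidiagWeight
  simp only [mul_sum, mul_ite, mul_zero]
  simp_rw [← regroup]
  conv_rhs => rw [sum_comm]
  exact sum_congr rfl fun _ _ => sum_comm

section PositiveWeight

variable {N : ℕ} {w : Fin N → ℝ}

lemma antidiagWeight_pos (hw : ∀ i, 0 < w i) (j l : Fin N) :
    0 < antidiagWeight N w (j.1 + l.1) := by
  have term_nonneg : ∀ j' l' : Fin N,
      0 ≤ if j'.1 + l'.1 = j.1 + l.1 then w j' * w l' else 0 := fun j' l' => by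
    split_ifs
    exacts [(mul_pos (hw j') (hw l')).le, le_rfl]
  refine sum_pos' (fun j' _ => sum_nonneg fun l' _ => term_nonneg j' l') ⟨j, mem_univ _, ?_⟩
  refine sum_pos' (fun l' _ => term_nonneg j l') ⟨l, mem_univ _, ?_⟩
  simpa using mul_pos (hw j) (hw l)

lemma hankelAdj_apply_of_isHankel (hw : ∀ i, 0 < w i) {A : Matrix (Fin N) (Fin N) ℂ}
    (hA : IsHankel A) {m : Fin (2 * N - 1)} {j l : Fin N} (h : j.1 + l.1 = m.1) :
    hankelAdj N w A m = A j l := by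
  have hω : (antidiagWeight N w m.1 : ℂ) ≠ 0 := by
    rw [← h]
    exact_mod_cast (antidiagWeight_pos hw j l).ne'
  have hsum : (∑ j' : Fin N, ∑ l' : Fin N,
      if j'.1 + l'.1 = m.1 then (w j' : ℂ) * A j' l' * (w l' : ℂ) else 0)
      = (antidiagWeight N w m.1 : ℂ) * A j l := by
    unfold antidiagWeight
    push_cast
    rw [sum_mul]
    refine sum_congr rfl fun j' _ => ?_
    rw [sum_mul]
    refine sum_congr rfl fun l' _ => ?_
    split_ifs with hc
    · rw [hA j' l' j l (by omega)]
      push_cast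
      ring
    · simp
  rw [hankelAdj, hsum, inv_mul_cancel_left₀ hω]

lemma hankelOf_hankelAdj_of_isHankel (hw : ∀ i, 0 < w i) {A : Matrix (Fin N) (Fin N) ℂ}
    (hA : IsHankel A) : hankelOf N (hankelAdj N w A) = A := by
  ext j l
  exact hankelAdj_apply_of_isHankel hw hA rfl

lemma wFrobSq_hankelOf_sub_of_isHankel (hw : ∀ i, 0 < w i) (f : Fin (2 * N - 1) → ℂ)
    {A : Matrix (Fin N) (Fin N) ℂ} (hA : IsHankel A) :
    wFrobSq N w (hankelOf N f - A) = omegaNormSq N w (f - hankelAdj N w A) := by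
  conv_lhs => rw [← hankelOf_hankelAdj_of_isHankel hw hA]
  rw [← hankelOf_sub, wFrobSq_hankelOf]

end PositiveWeight

/-- Minimizing `‖Hf − H̃‖_w` over a set `S` of Hankel matrices is equivalent to
minimizing `‖f − g‖_{ℓ²(ω)}` over `g ∈ H*(S)`, and the solutions are related by
`H(H* H̃) = H̃`. -/
theorem hankel_minimization_equivalence (N : ℕ) (w : Fin N → ℝ) (hw : ∀ i, 0 < w i)
    (f : Fin (2 * N - 1) → ℂ) (S : Set (Matrix (Fin N) (Fin N) ℂ))
    (hS : ∀ A ∈ S, ∀ j l j' l' : Fin N, j.1 + l.1 = j'.1 + l'.1 → A j l = A j' l')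
    (Ht : Matrix (Fin N) (Fin N) ℂ) (hHt : Ht ∈ S) :
    ((∀ A ∈ S, wFrobSq N w (hankelOf N f - Ht) ≤ wFrobSq N w (hankelOf N f - A)) ↔
      (∀ g ∈ hankelAdj N w '' S,
        omegaNormSq N w (f - hankelAdj N w Ht) ≤ omegaNormSq N w (f - g))) ∧
    hankelOf N (hankelAdj N w Ht) = Ht := by
  have objective_eq : ∀ A ∈ S,
      wFrobSq N w (hankelOf N f - A) = omegaNormSq N w (f - hankelAdj N w A) :=
    fun A hA => wFrobSq_hankelOf_sub_of_isHankel hw f (hS A hA)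
  refine ⟨?_, hankelOf_hankelAdj_of_isHankel hw (hS Ht hHt)⟩
  rw [Set.forall_mem_image, objective_eq Ht hHt]
  exact forall₂_congr fun A hA => by rw [objective_eq A hA]
end

section
/- Let A = Hf be an infinite Hankel matrix (A(j,l) = f(j+l), indices in ℕ) of finite rank. If r is the smallest index such that column A(·,r) is a linear combination of the columns A(·,0),…,A(·,r−1), say A(·,r) = −Σ_{l=0}^{r−1} λ_l A(·,l), then f satisfies the linear recursion f(k) + Σ_{l=0}^{r−1} λ_l f(k−r+l) = 0 for all k ≥ r, and consequently rank A = r. -/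
/-!
The recursion on `f` says that each column `n + r` of the Hankel matrix is the same combination
of the `r` columns before it, so by induction every column lies in the span of the first `r`.
Minimality of `r` makes those first `r` columns linearly independent, hence they form a basis
of the column space.
-/

open Set Submodule

section Sequences

theorem span_range_eq_span_image_Iio {R M : Type*} [Semiring R] [AddCommMonoid M] [Module R M]
    {v : ℕ → M} {r : ℕ} (h : ∀ n, v (n + r) ∈ span R (v '' Ico n (n + r))) :
    span R (range v) = span R (v '' Iio r) := by
  have hmem : ∀ n, v n ∈ span R (v '' Iio r) := by
    intro n
    induction n using Nat.strong_induction_on with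
    | _ n ih =>
      rcases lt_or_ge n r with hn | hn
      · exact subset_span ⟨n, hn, rfl⟩
      · obtain ⟨m, rfl⟩ := Nat.exists_eq_add_of_le' hn
        refine span_le.mpr ?_ (h m)
        rintro _ ⟨k, hk, rfl⟩
        exact ih k hk.2
  refine le_antisymm (span_le.mpr ?_) (span_mono (image_subset_range _ _))
  rintro _ ⟨n, rfl⟩
  exact hmem n

variable {K V : Type*} [DivisionRing K] [AddCommGroup V] [Module K V]

theorem linearIndepOn_Iio_of_notMem_span {v : ℕ → V} {r : ℕ}
    (h : ∀ n < r, v n ∉ span K (v '' Iio n)) : LinearIndepOn K v (Iio r) := by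
  induction r with
  | zero => simp
  | succ n ih =>
    have hIio : Iio (n + 1) = insert n (Iio n) := by ext; simp
    rw [hIio, linearIndepOn_insert (s := Iio n) (by simp)]
    exact ⟨ih fun m hm => h m (by omega), h n (by omega)⟩

theorem finrank_span_image_Iio_of_notMem_span {v : ℕ → V} {r : ℕ}
    (h : ∀ n < r, v n ∉ span K (v '' Iio n)) : Module.finrank K (span K (v '' Iio r)) = r := by
  have hli : LinearIndependent K (v ∘ Fin.val : Fin r → V) :=
    (linearIndepOn_Iio_of_notMem_span h).comp (fun i : Fin r => (⟨i, i.isLt⟩ : Iio r)) fun i j hij =>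
      Fin.ext (congrArg Subtype.val hij)
  rw [← Fin.range_val, ← range_comp, finrank_span_eq_card hli, Fintype.card_fin]

end Sequences

theorem hankel_column_mem_span_of_recursion {R : Type*} [CommRing R] (f : ℕ → R) {r : ℕ}
    (lam : ℕ → R) (hdep : ∀ j, f (j + r) + ∑ l ∈ Finset.range r, lam l * f (j + l) = 0) (n : ℕ) :
    (fun j => f (j + (n + r))) ∈ span R ((fun l j => f (j + l)) '' Ico n (n + r)) := by
  have hcomb : (fun j => f (j + (n + r))) =
      -∑ l ∈ Finset.range r, lam l • fun j => f (j + (n + l)) := by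
    funext j
    simp only [Pi.neg_apply, Finset.sum_apply, Pi.smul_apply, smul_eq_mul, ← add_assoc]
    linear_combination hdep (j + n)
  rw [hcomb]
  refine neg_mem (sum_mem fun l hl => smul_mem _ _ (subset_span ⟨n + l, ?_, rfl⟩))
  have := Finset.mem_range.mp hl
  constructor <;> omega

theorem infinite_hankel_recursion_and_rank_general (f : ℕ → ℂ) (r : ℕ) (lam : ℕ → ℂ)
    (col : ℕ → ℕ → ℂ) (hcol : col = fun l j => f (j + l))
    (hmin : ∀ r' < r, col r' ∉ Submodule.span ℂ (col '' Set.Iio r'))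
    (hdep : ∀ j : ℕ, f (j + r) + ∑ l ∈ Finset.range r, lam l * f (j + l) = 0) :
    (∀ k, r ≤ k → f k + ∑ l ∈ Finset.range r, lam l * f (k - r + l) = 0) ∧
    Module.finrank ℂ (Submodule.span ℂ (Set.range col)) = r := by
  refine ⟨fun k hk => by simpa [Nat.sub_add_cancel hk] using hdep (k - r), ?_⟩
  have hspan : span ℂ (range col) = span ℂ (col '' Iio r) := by
    subst hcol
    exact span_range_eq_span_image_Iio (hankel_column_mem_span_of_recursion f lam hdep)
  rw [hspan, finrank_span_image_Iio_of_notMem_span hmin]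

/-- If the `r`-th column of an infinite Hankel matrix `Hf` is the first one that is a
linear combination of the preceding columns, say with coefficients `-λ_l`, then `f`
satisfies the corresponding linear recursion for all `k ≥ r`, and the rank of `Hf`
(the dimension of its column space) equals `r`. -/
theorem infinite_hankel_recursion_and_rank (f : ℕ → ℂ) (r : ℕ) (lam : ℕ → ℂ)
    (col : ℕ → ℕ → ℂ) (hcol : col = fun l j => f (j + l))
    (hfin : FiniteDimensional ℂ (Submodule.span ℂ (Set.range col)))
    (hmin : ∀ r' < r, col r' ∉ Submodule.span ℂ (col '' Set.Iio r'))
    (hdep : ∀ j : ℕ, f (j + r) + ∑ l ∈ Finset.range r, lam l * f (j + l) = 0) :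
    (∀ k, r ≤ k → f k + ∑ l ∈ Finset.range r, lam l * f (k - r + l) = 0) ∧
    Module.finrank ℂ (Submodule.span ℂ (Set.range col)) = r :=
  infinite_hankel_recursion_and_rank_general f r lam col hcol hmin hdep
end

section
/- If A is an infinite Hankel matrix of finite rank r, then the r×r upper-left corner submatrix (A(j,l))_{0≤j,l≤r−1} is nonsingular. -/
/-!
The columns `c l = (f (j + l))_j` of a Hankel matrix satisfy `c (l + 1) = S (c l)` for the shift
`S`, so as soon as `c k` lies in the span of `c 0, …, c (k - 1)` that span is `S`-invariant and
contains every column. Hence the first `r` columns are independent and span the column space.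
If `a` is in the kernel of the corner, the functional `u ↦ ∑ a l * u l` vanishes on `c 0, …, c (r - 1)`
by symmetry of the matrix, hence on every column, which by symmetry again says `∑ a l • c l = 0`,
so `a = 0`.
-/

open Module Set Submodule

section ShiftSequence

variable {K V : Type*} [Field K] [AddCommGroup V] [Module K V] {T : V →ₗ[K] V} {v : ℕ → V}

theorem span_range_eq_span_fin_of_mem (hv : ∀ n, T (v n) = v (n + 1)) {k : ℕ}
    (hk : v k ∈ span K (range fun i : Fin k => v i)) :
    span K (range v) = span K (range fun i : Fin k => v i) := by
  set P := span K (range fun i : Fin k => v i)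
  have hP : ∀ i < k, v i ∈ P := fun i hi => subset_span ⟨⟨i, hi⟩, rfl⟩
  have hT : ∀ u ∈ P, T u ∈ P := by
    refine fun u hu => span_induction (p := fun u _ => T u ∈ P) ?_ ?_ ?_ ?_ hu
    · rintro _ ⟨i, rfl⟩
      rw [hv]
      rcases (Nat.succ_le_of_lt i.2).lt_or_eq with h | h
      · exact hP _ h
      · rw [show (i : ℕ) + 1 = k from h]
        exact hk
    · simp
    · intro _ _ _ _ hx hy
      simpa using P.add_mem hx hy
    · intro c _ _ hx
      simpa using P.smul_mem c hx
  have hall : ∀ m, v m ∈ P := by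
    intro m
    induction m with
    | zero =>
      rcases k.eq_zero_or_pos with rfl | h
      · exact hk
      · exact hP 0 h
    | succ m ih => exact hv m ▸ hT _ ih
  exact le_antisymm (span_le.2 (range_subset_iff.2 hall)) (span_mono (range_comp_subset_range _ v))

theorem linearIndependent_fin_of_finrank_span_range_eq (hv : ∀ n, T (v n) = v (n + 1)) {r : ℕ}
    (hr : finrank K (span K (range v)) = r) : LinearIndependent K fun i : Fin r => v i := by
  suffices ∀ k ≤ r, LinearIndependent K fun i : Fin k => v i from this r le_rfl
  intro k
  induction k with
  | zero => exact fun _ => linearIndependent_empty_type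
  | succ k ih =>
    intro hkr
    have hnot : v k ∉ span K (range fun i : Fin k => v i) := by
      intro hk
      have := finrank_range_le_card (R := K) fun i : Fin k => v i
      rw [Set.finrank, ← span_range_eq_span_fin_of_mem hv hk, hr, Fintype.card_fin] at this
      omega
    have hsnoc : (Fin.snoc (fun i : Fin k => v i) (v k) : Fin (k + 1) → V) =
        fun i : Fin (k + 1) => v i := by
      funext i
      refine Fin.lastCases ?_ (fun i => ?_) i <;> simp
    exact hsnoc ▸ linearIndependent_finSnoc.2 ⟨ih (Nat.le_of_succ_le hkr), hnot⟩

end ShiftSequence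

theorem det_corner_ne_zero_of_symmetric {K : Type*} [Field K] {c : ℕ → ℕ → K}
    (hc : ∀ j l, c l j = c j l) {r : ℕ} (hli : LinearIndependent K fun i : Fin r => c i)
    (hspan : ∀ m, c m ∈ span K (range fun i : Fin r => c i)) :
    (Matrix.of fun j l : Fin r => c l j).det ≠ 0 := by
  classical
  intro hdet
  obtain ⟨a, ha, hva⟩ := Matrix.exists_mulVec_eq_zero_iff.2 hdet
  let ψ : (ℕ → K) →ₗ[K] K := ∑ l : Fin r, a l • LinearMap.proj (l : ℕ)
  have hψ : ∀ u, ψ u = ∑ l : Fin r, a l * u l := by simp [ψ]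
  have hker : span K (range fun i : Fin r => c i) ≤ LinearMap.ker ψ := by
    refine span_le.2 (range_subset_iff.2 fun j => ?_)
    simpa [hψ, Matrix.mulVec, dotProduct, hc, mul_comm] using congr_fun hva j
  have hzero : ∑ l : Fin r, a l • c l = 0 := by
    funext m
    simpa [hψ, hc] using hker (hspan m)
  exact ha (funext (Fintype.linearIndependent_iff.1 hli a hzero))

/-- The upper-left `r × r` corner of an infinite Hankel matrix of finite rank `r`
is nonsingular. -/
theorem infinite_hankel_corner_nonsingular (f : ℕ → ℂ) (r : ℕ)
    (col : ℕ → ℕ → ℂ) (hcol : col = fun l j => f (j + l))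
    (hfin : FiniteDimensional ℂ (Submodule.span ℂ (Set.range col)))
    (hrank : Module.finrank ℂ (Submodule.span ℂ (Set.range col)) = r) :
    (Matrix.of fun j l : Fin r => f (j.1 + l.1)).det ≠ 0 := by
  subst hcol
  have hshift : ∀ l, LinearMap.funLeft ℂ ℂ (· + 1) (fun j => f (j + l)) =
      fun j => f (j + (l + 1)) :=
    fun l => funext fun j => by simp only [LinearMap.funLeft_apply]; ring_nf
  have hli := linearIndependent_fin_of_finrank_span_range_eq hshift hrank
  have hspan : span ℂ (range fun i : Fin r => fun j => f (j + i)) =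
      span ℂ (range fun l j => f (j + l)) :=
    eq_of_le_of_finrank_eq (span_mono (range_subset_iff.2 fun i => mem_range_self _))
      (by rw [finrank_span_eq_card hli, hrank, Fintype.card_fin])
  exact det_corner_ne_zero_of_symmetric (fun j l => congrArg f (add_comm j l)) hli
    fun m => hspan ▸ subset_span (mem_range_self m)
end

section
/- Let A = Hf be an N×N Hankel matrix (A(j,l) = f(j+l), 0 ≤ j,l ≤ N−1) of rank r < N, and assume the r×r upper-left corner submatrix is nonsingular. Then there exist uniquely determined constants λ₀, …, λ_{r−1} ∈ ℂ such that f(k) + Σ_{l=0}^{r−1} λ_l f(k−r+l) = 0 for all k = r, r+1, …, 2N−2. -/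
/-!
If the rank of `A = hankelMatrix N f` equals the order `r` of its nonsingular leading corner, then
restricting vectors to their first `r` entries is injective on the column space of `A`:
it maps this `r`-dimensional space onto `Kʳ`. For `r ≤ l < N` the vector
`j ↦ f (j + l) + ∑ₘ λₘ f (j + l - r + m)` is a combination of columns of `A`, and the
Hankel structure makes its first `r` entries for `l + 1` the entries `1, …, r` of the one
for `l`. The equations for `r ≤ k < 2r` form the corner system, which determines `λ`; by
induction on `l` the whole recursion then holds.
-/

open Matrix

theorem Matrix.eq_zero_of_mem_range_of_comp_eq_zero {K m n ι : Type*} [Field K]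
    [Fintype n] [Fintype ι] [DecidableEq n] [DecidableEq ι]
    (A : Matrix m n K) (e : ι → m) (e' : ι → n) (hrank : A.rank = Fintype.card ι)
    (hdet : (A.submatrix e e').det ≠ 0) {v : m → K}
    (hv : v ∈ LinearMap.range A.mulVecLin) (he : v ∘ e = 0) : v = 0 := by
  let restrict := LinearMap.funLeft K K e ∘ₗ (LinearMap.range A.mulVecLin).subtype
  have hsurj : Function.Surjective restrict := by
    intro w
    obtain ⟨μ, rfl⟩ := mulVec_surjective_iff_isUnit.2
      ((isUnit_iff_isUnit_det _).2 (isUnit_iff_ne_zero.2 hdet)) w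
    refine ⟨⟨A *ᵥ ∑ i, μ i • Pi.single (e' i) 1, LinearMap.mem_range_self _ _⟩, ?_⟩
    ext j
    simp [restrict, LinearMap.funLeft_apply, mulVec_sum, mulVec_smul, mulVec, dotProduct,
      mul_comm]
  have hinj : Function.Injective restrict :=
    (LinearMap.injective_iff_surjective_of_finrank_eq_finrank
      (by rw [Module.finrank_fintype_fun_eq_card]; exact hrank)).2 hsurj
  simpa using congrArg Subtype.val (hinj (a₁ := ⟨v, hv⟩) (a₂ := 0) he)

section

variable {K : Type*} [Field K]

def hankelMatrix (N : ℕ) (f : ℕ → K) : Matrix (Fin N) (Fin N) K :=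
  Matrix.of fun j l => f (j.1 + l.1)

def recursionDefect (f : ℕ → K) {r : ℕ} (lam : Fin r → K) (k : ℕ) : K :=
  f k + ∑ l : Fin r, lam l * f (k - r + l.1)

theorem recursionDefect_shift_mem_range {N r l : ℕ} (f : ℕ → K) (lam : Fin r → K)
    (hrl : r ≤ l) (hlN : l < N) :
    (fun j : Fin N => recursionDefect f lam (j + l)) ∈
      LinearMap.range (hankelMatrix N f).mulVecLin := by
  refine ⟨Pi.single ⟨l, hlN⟩ 1 + ∑ m : Fin r, lam m • Pi.single ⟨l - r + m, by omega⟩ 1, ?_⟩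
  ext j
  simp only [mulVecLin_apply, mulVec_add, mulVec_sum, mulVec_smul, mulVec_single_one]
  simp [recursionDefect, hankelMatrix, Nat.add_sub_assoc hrl, add_assoc]

theorem recursionDefect_eq_zero_iff_mulVec_eq {r : ℕ} (f : ℕ → K) (lam : Fin r → K) :
    (∀ i : Fin r, recursionDefect f lam (r + i) = 0) ↔
      hankelMatrix r f *ᵥ lam = -fun i : Fin r => f (r + i) := by
  rw [eq_neg_iff_add_eq_zero, funext_iff]
  refine forall_congr' fun i => ?_
  simp only [recursionDefect, add_tsub_cancel_left, Pi.add_apply, mulVec, dotProduct,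
    hankelMatrix, of_apply, Pi.zero_apply]
  rw [add_comm, Finset.sum_congr rfl fun l _ => mul_comm _ _]

theorem recursionDefect_eq_zero_of_rank_eq {N r : ℕ} (f : ℕ → K) (lam : Fin r → K)
    (hrN : r < N) (hrank : (hankelMatrix N f).rank = r) (hcorner : (hankelMatrix r f).det ≠ 0)
    (hbase : ∀ i : Fin r, recursionDefect f lam (r + i) = 0) :
    ∀ k, r ≤ k → k ≤ 2 * N - 2 → recursionDefect f lam k = 0 := by
  have hspread : ∀ l, r ≤ l → l < N → (∀ i : Fin r, recursionDefect f lam (i + l) = 0) →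
      ∀ j : Fin N, recursionDefect f lam (j + l) = 0 := fun l hrl hlN hi =>
    congrFun <| (hankelMatrix N f).eq_zero_of_mem_range_of_comp_eq_zero
      (Fin.castLE hrN.le) (Fin.castLE hrN.le) (hrank.trans (Fintype.card_fin r).symm) hcorner
      (recursionDefect_shift_mem_range f lam hrl hlN) (funext hi)
  have hcolumn : ∀ l, r ≤ l → l < N → ∀ j : Fin N, recursionDefect f lam (j + l) = 0 := by
    intro l hrl
    induction l, hrl using Nat.le_induction with
    | base => exact fun hrN' => hspread r le_rfl hrN' fun i => by rw [add_comm]; exact hbase i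
    | succ l hrl ih =>
      refine fun hlN => hspread (l + 1) (by omega) hlN fun i => ?_
      simpa [add_assoc, add_comm 1] using ih (by omega) ⟨i + 1, by omega⟩
  intro k hrk hkN
  simpa [show k - min k (N - 1) + min k (N - 1) = k by omega] using
    hcolumn (min k (N - 1)) (by omega) (by omega) ⟨k - min k (N - 1), by omega⟩

end

/-- A finite `N × N` Hankel matrix of rank `r < N` whose upper-left `r × r` corner is
nonsingular determines unique recursion coefficients `λ₀, …, λ_{r−1}` such that
`f(k) + Σ_{l<r} λ_l f(k−r+l) = 0` for `r ≤ k ≤ 2N−2`. -/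
theorem finite_hankel_unique_recursion (N : ℕ) (f : ℕ → ℂ) (r : ℕ) (hrN : r < N)
    (hrank : (Matrix.of fun j l : Fin N => f (j.1 + l.1)).rank = r)
    (hcorner : (Matrix.of fun j l : Fin r => f (j.1 + l.1)).det ≠ 0) :
    ∃! lam : Fin r → ℂ, ∀ k, r ≤ k → k ≤ 2 * N - 2 →
      f k + ∑ l : Fin r, lam l * f (k - r + l.1) = 0 := by
  have hunit : IsUnit (hankelMatrix r f) :=
    (isUnit_iff_isUnit_det _).2 (isUnit_iff_ne_zero.2 hcorner)
  have hbij : Function.Bijective (hankelMatrix r f).mulVec :=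
    ⟨mulVec_injective_iff_isUnit.2 hunit, mulVec_surjective_iff_isUnit.2 hunit⟩
  have hiff : ∀ lam : Fin r → ℂ,
      (∀ k, r ≤ k → k ≤ 2 * N - 2 → recursionDefect f lam k = 0) ↔
        hankelMatrix r f *ᵥ lam = -fun i : Fin r => f (r + i) := fun lam =>
    ⟨fun h => (recursionDefect_eq_zero_iff_mulVec_eq f lam).1 fun i =>
        h _ (Nat.le_add_right r i) (by omega),
      fun h => recursionDefect_eq_zero_of_rank_eq f lam hrN hrank hcorner
        ((recursionDefect_eq_zero_iff_mulVec_eq f lam).2 h)⟩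
  exact (existsUnique_congr hiff).2 (hbij.existsUnique _)
end

section
/- Let A be an infinite Hankel matrix of rank r with f(k) = Σ_{ν=1}^{p} Q_ν(k) ζ_ν^k (distinct nonzero ζ_ν, deg Q_ν = m_ν − 1, Σ m_ν = r). For k ≥ r, a vector (μ₀,…,μ_k) ∈ ℂ^{k+1} lies in the kernel of the upper-left (k+1)×(k+1) corner submatrix A_k if and only if the polynomial Σ_{l=0}^{k} μ_l x^l is divisible by the central polynomial P(x) = Π_{ν=1}^{p}(x − ζ_ν)^{m_ν} (equivalently, equals Q(x)P(x) for some polynomial Q of degree at most k − r). -/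
/-!
Let `L` be the functional `Xⁱ ↦ f i` on `ℂ[X]` and `g = ∑ μₗ Xˡ`, so that `A_k μ = 0` says
`L (Xʲ g) = 0` for `j ≤ k`. Against the summand `Q_ν(i) ζ_νⁱ` of `f`, multiplying by `X - ζ_ν`
amounts to multiplying by `ζ_ν` and replacing `Q_ν` by its forward difference. As `Δ` lowers
degrees, `L` kills the ideal `(P)`, which is the easy direction. Conversely, reducing modulo `P`
(of degree `r ≤ k`) gives `L (h g) = 0` for all `h`. If `g = (X - ζ_ν)ᵉ g₁` with `e < m_ν` and
`g₁(ζ_ν) ≠ 0`, put `S = ∏_{μ ≠ ν} (X - ζ_μ)^m_μ` and `h = (X - ζ_ν)^(m_ν - 1 - e) S`. Every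
summand but the `ν`-th vanishes on `h g = (X - ζ_ν)^(m_ν - 1) S g₁`, while `Δ^(m_ν - 1) Q_ν` is
the constant `(m_ν - 1)! lc(Q_ν)`, so the `ν`-th is
`ζ_ν^(m_ν - 1) (m_ν - 1)! lc(Q_ν) S(ζ_ν) g₁(ζ_ν) ≠ 0`.
-/

open Polynomial Finset
open scoped Nat

namespace Polynomial

section CommRing

variable {R : Type*} [CommRing R]

/-- `∑ cᵢ Xⁱ ↦ ∑ cᵢ w i`. The Hankel matrix `(f (j + l))` is the matrix of the bilinear form
`(F, G) ↦ coeffPairing f (F * G)` in the monomial basis. -/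
noncomputable def coeffPairing (w : ℕ → R) : R[X] →ₗ[R] R :=
  lsum fun i => LinearMap.mulRight R (w i)

lemma coeffPairing_monomial (w : ℕ → R) (n : ℕ) (c : R) :
    coeffPairing w (monomial n c) = c * w n := by
  simp [coeffPairing, sum_monomial_index]

lemma coeffPairing_sum {ι : Type*} (s : Finset ι) (w : ι → ℕ → R) (F : R[X]) :
    coeffPairing (fun i => ∑ ν ∈ s, w ν i) F = ∑ ν ∈ s, coeffPairing (w ν) F := by
  simp only [coeffPairing, lsum_apply, LinearMap.mulRight_apply, sum_def, mul_sum]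
  exact sum_comm

lemma coeffPairing_const_mul_pow (c a : R) (F : R[X]) :
    coeffPairing (fun i => c * a ^ i) F = c * F.eval a := by
  simp only [coeffPairing, lsum_apply, LinearMap.mulRight_apply, eval_eq_sum, sum_def, mul_sum]
  exact sum_congr rfl fun i _ => by ring

lemma coeffPairing_X_sub_C_mul (a : R) (u : R → R) (F : R[X]) :
    coeffPairing (fun i => u i * a ^ i) ((X - C a) * F) =
      a * coeffPairing (fun i => fwdDiff 1 u i * a ^ i) F := by
  induction F using Polynomial.induction_on' with
  | add p q hp hq => rw [mul_add, map_add, map_add, hp, hq, mul_add]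
  | monomial n c =>
    have : (X - C a) * monomial n c = monomial (n + 1) c - monomial n (a * c) := by
      rw [sub_mul, X_mul_monomial, C_mul_monomial]
    rw [this, map_sub, coeffPairing_monomial, coeffPairing_monomial, coeffPairing_monomial, fwdDiff]
    push_cast
    ring

lemma coeffPairing_X_sub_C_pow_mul (a : R) (u : R → R) (n : ℕ) (F : R[X]) :
    coeffPairing (fun i => u i * a ^ i) ((X - C a) ^ n * F) =
      a ^ n * coeffPairing (fun i => (fwdDiff 1)^[n] u i * a ^ i) F := by
  induction n generalizing u with
  | zero => simp
  | succ n ih =>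
    rw [pow_succ', mul_assoc, coeffPairing_X_sub_C_mul, ih, Function.iterate_succ_apply]
    ring

lemma coeffPairing_X_sub_C_pow_mul_of_natDegree_lt (a : R) (T : R[X]) {n : ℕ}
    (hT : T.natDegree < n) (F : R[X]) :
    coeffPairing (fun i => T.eval (i : R) * a ^ i) ((X - C a) ^ n * F) = 0 := by
  rw [coeffPairing_X_sub_C_pow_mul a T.eval, fwdDiff_iter_eq_zero_of_degree_lt hT]
  simp [coeffPairing, Polynomial.sum_def]

lemma coeffPairing_X_sub_C_pow_natDegree_mul (a : R) (T : R[X]) (F : R[X]) :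
    coeffPairing (fun i => T.eval (i : R) * a ^ i) ((X - C a) ^ T.natDegree * F) =
      a ^ T.natDegree * (T.leadingCoeff * T.natDegree !) * F.eval a := by
  rw [coeffPairing_X_sub_C_pow_mul a T.eval, fwdDiff_iter_degree_eq_factorial, mul_assoc,
    ← coeffPairing_const_mul_pow]
  simp

lemma coeffPairing_X_pow_mul_sum_C_mul_X_pow (w : ℕ → R) (j k : ℕ) (μ : Fin (k + 1) → R) :
    coeffPairing w (X ^ j * ∑ l : Fin (k + 1), C (μ l) * X ^ l.1) =
      ∑ l : Fin (k + 1), w (j + l.1) * μ l := by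
  simp only [mul_sum, map_sum]
  refine sum_congr rfl fun l _ => ?_
  rw [mul_left_comm, ← pow_add, C_mul_X_pow_eq_monomial, coeffPairing_monomial, mul_comm]

lemma hankel_mulVec_eq_zero_iff (f : ℕ → R) (k : ℕ) (μ : Fin (k + 1) → R) :
    (Matrix.of fun j l : Fin (k + 1) => f (j.1 + l.1)).mulVec μ = 0 ↔
      ∀ j : Fin (k + 1), coeffPairing f (X ^ j.1 * ∑ l : Fin (k + 1), C (μ l) * X ^ l.1) = 0 := by
  simp only [funext_iff, coeffPairing_X_pow_mul_sum_C_mul_X_pow, Matrix.mulVec, dotProduct,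
    Matrix.of_apply, Pi.zero_apply]

lemma coeffPairing_mul_eq_zero_of_forall_X_pow_mul [Nontrivial R] {w : ℕ → R} {P g : R[X]}
    (hP : P.Monic) (hPw : ∀ T, coeffPairing w (P * T) = 0)
    (hg : ∀ j < P.natDegree, coeffPairing w (X ^ j * g) = 0) (h : R[X]) :
    coeffPairing w (h * g) = 0 := by
  classical
  have hlow : degreeLT R P.natDegree ≤
      LinearMap.ker ((coeffPairing w).comp (LinearMap.mulRight R g)) := by
    rw [degreeLT_eq_span_X_pow, Submodule.span_le]
    intro x hx
    obtain ⟨j, hj, rfl⟩ := by simpa using hx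
    exact hg j hj
  rw [← modByMonic_add_div h P, add_mul, map_add, mul_assoc, hPw, add_zero]
  refine hlow (mem_degreeLT.2 ?_)
  rw [← degree_eq_natDegree hP.ne_zero]
  exact degree_modByMonic_lt h hP

variable {ι : Type*} [Fintype ι] (ζ : ι → R) (Q : ι → R[X])

noncomputable def expPolySeq : ℕ → R := fun j => ∑ ν, (Q ν).eval (j : R) * ζ ν ^ j

noncomputable def centralPoly : R[X] := ∏ ν, (X - C (ζ ν)) ^ ((Q ν).natDegree + 1)

lemma centralPoly_monic : (centralPoly ζ Q).Monic :=
  monic_prod_of_monic _ _ fun _ _ => (monic_X_sub_C _).pow _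

lemma natDegree_centralPoly [Nontrivial R] :
    (centralPoly ζ Q).natDegree = ∑ ν, ((Q ν).natDegree + 1) := by
  rw [centralPoly, natDegree_prod_of_monic _ _ fun ν _ => (monic_X_sub_C _).pow _]
  exact sum_congr rfl fun ν _ => by rw [(monic_X_sub_C _).natDegree_pow, natDegree_X_sub_C, mul_one]

lemma coeffPairing_expPolySeq (F : R[X]) :
    coeffPairing (expPolySeq ζ Q) F =
      ∑ ν, coeffPairing (fun i => (Q ν).eval (i : R) * ζ ν ^ i) F :=
  coeffPairing_sum _ _ F

lemma coeffPairing_expPolySeq_centralPoly_mul (T : R[X]) :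
    coeffPairing (expPolySeq ζ Q) (centralPoly ζ Q * T) = 0 := by
  refine (coeffPairing_expPolySeq ζ Q _).trans (sum_eq_zero fun ν _ => ?_)
  obtain ⟨U, hU⟩ := dvd_prod_of_mem (fun ν => (X - C (ζ ν)) ^ ((Q ν).natDegree + 1)) (mem_univ ν)
  rw [centralPoly, hU, mul_assoc]
  exact coeffPairing_X_sub_C_pow_mul_of_natDegree_lt _ _ (Nat.lt_succ_self _) _

lemma coeffPairing_expPolySeq_eq_of_dvd {ν : ι} {F : R[X]}
    (hF : ∀ μ ≠ ν, (X - C (ζ μ)) ^ ((Q μ).natDegree + 1) ∣ F) :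
    coeffPairing (expPolySeq ζ Q) F = coeffPairing (fun i => (Q ν).eval (i : R) * ζ ν ^ i) F := by
  rw [coeffPairing_expPolySeq, sum_eq_single ν (fun μ _ hμ => ?_) (absurd (mem_univ ν))]
  obtain ⟨U, rfl⟩ := hF μ hμ
  exact coeffPairing_X_sub_C_pow_mul_of_natDegree_lt _ _ (Nat.lt_succ_self _) _

end CommRing

section Field

variable {K : Type*} [Field K] [CharZero K] {ι : Type*} [Fintype ι] {ζ : ι → K} {Q : ι → K[X]}

lemma X_sub_C_pow_dvd_of_forall_coeffPairing_expPolySeq_mul (hζ : Function.Injective ζ)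
    (hζ0 : ∀ ν, ζ ν ≠ 0) {ν : ι} (hQ : Q ν ≠ 0) {g : K[X]}
    (hg : ∀ h, coeffPairing (expPolySeq ζ Q) (h * g) = 0) :
    (X - C (ζ ν)) ^ ((Q ν).natDegree + 1) ∣ g := by
  classical
  by_contra hndvd
  have hg0 : g ≠ 0 := by rintro rfl; exact hndvd (dvd_zero _)
  obtain ⟨g₁, hg₁, hg₁root⟩ := g.exists_eq_pow_rootMultiplicity_mul_and_not_dvd hg0 (ζ ν)
  set d := (Q ν).natDegree
  set e := g.rootMultiplicity (ζ ν)
  have he : e ≤ d := by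
    by_contra! he
    exact hndvd (hg₁ ▸ dvd_mul_of_dvd_left (pow_dvd_pow _ he) _)
  set S := ∏ μ ∈ univ.erase ν, (X - C (ζ μ)) ^ ((Q μ).natDegree + 1)
  have hSg : (X - C (ζ ν)) ^ (d - e) * S * g = (X - C (ζ ν)) ^ d * (S * g₁) := by
    rw [hg₁, ← Nat.sub_add_cancel he, pow_add, Nat.add_sub_cancel]
    ring
  have key := hg ((X - C (ζ ν)) ^ (d - e) * S)
  rw [hSg, coeffPairing_expPolySeq_eq_of_dvd ζ Q fun μ hμ => dvd_mul_of_dvd_right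
      (dvd_mul_of_dvd_left (dvd_prod_of_mem _ (mem_erase.2 ⟨hμ, mem_univ μ⟩)) _) _,
    coeffPairing_X_sub_C_pow_natDegree_mul, eval_mul] at key
  have hS : S.eval (ζ ν) ≠ 0 := by
    rw [eval_prod, prod_ne_zero_iff]
    intro μ hμ
    simpa [sub_eq_zero] using fun h => (ne_of_mem_erase hμ) (hζ h.symm)
  have hg₁ζ : g₁.eval (ζ ν) ≠ 0 := fun h => hg₁root (dvd_iff_isRoot.2 h)
  have hlc : (Q ν).leadingCoeff * d ! ≠ 0 :=
    mul_ne_zero (leadingCoeff_ne_zero.2 hQ) (Nat.cast_ne_zero.2 (Nat.factorial_ne_zero d))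
  exact mul_ne_zero (mul_ne_zero (pow_ne_zero _ (hζ0 ν)) hlc) (mul_ne_zero hS hg₁ζ) key

lemma centralPoly_dvd_of_forall_coeffPairing_expPolySeq_mul (hζ : Function.Injective ζ)
    (hζ0 : ∀ ν, ζ ν ≠ 0) (hQ : ∀ ν, Q ν ≠ 0) {g : K[X]}
    (hg : ∀ h, coeffPairing (expPolySeq ζ Q) (h * g) = 0) : centralPoly ζ Q ∣ g :=
  prod_dvd_of_coprime (fun _ _ _ _ hne => (pairwise_coprime_X_sub_C hζ hne).pow) fun ν _ =>
    X_sub_C_pow_dvd_of_forall_coeffPairing_expPolySeq_mul hζ hζ0 (hQ ν) hg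

end Field

end Polynomial

/-- Kernel characterization for corner submatrices of an infinite Hankel matrix of
finite rank: for `k ≥ r`, a vector `μ` lies in the kernel of the `(k+1) × (k+1)`
upper-left corner of `Hf` iff the polynomial it generates is divisible by the
central polynomial `P(x) = Π_ν (x − ζ_ν)^{m_ν}`. -/
theorem hankel_corner_kernel_characterization (f : ℕ → ℂ) (p r : ℕ)
    (ζ : Fin p → ℂ) (m : Fin p → ℕ) (Q : Fin p → ℂ[X])
    (hζ : Function.Injective ζ) (hζ0 : ∀ ν, ζ ν ≠ 0)
    (hm : ∀ ν, 1 ≤ m ν) (hsum : ∑ ν, m ν = r)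
    (hQdeg : ∀ ν, (Q ν).natDegree = m ν - 1) (hQne : ∀ ν, Q ν ≠ 0)
    (hf : ∀ j : ℕ, f j = ∑ ν, (Q ν).eval (j : ℂ) * ζ ν ^ j)
    (k : ℕ) (hk : r ≤ k) (μ : Fin (k + 1) → ℂ) :
    (Matrix.of fun j l : Fin (k + 1) => f (j.1 + l.1)).mulVec μ = 0 ↔
      (∏ ν, (X - C (ζ ν)) ^ m ν : ℂ[X]) ∣ ∑ l : Fin (k + 1), C (μ l) * X ^ l.1 := by
  obtain rfl : m = fun ν => (Q ν).natDegree + 1 := funext fun ν => by grind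
  obtain rfl : f = expPolySeq ζ Q := funext hf
  rw [← natDegree_centralPoly ζ Q] at hsum
  rw [hankel_mulVec_eq_zero_iff]
  constructor
  · intro hker
    refine centralPoly_dvd_of_forall_coeffPairing_expPolySeq_mul hζ hζ0 hQne fun h => ?_
    refine coeffPairing_mul_eq_zero_of_forall_X_pow_mul (centralPoly_monic ζ Q)
      (coeffPairing_expPolySeq_centralPoly_mul ζ Q) (fun j hj => ?_) h
    exact hker ⟨j, by omega⟩
  · rintro ⟨T, hT⟩ j
    rw [hT, mul_left_comm]
    exact coeffPairing_expPolySeq_centralPoly_mul ζ Q _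
end
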